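/- arXiv:2405.14227 — 4 statements merged into one kernel-verified Lean document; each statement's English description precedes it below -/
import Mathlib

section
/- Let G be a group, H ≤ G a subgroup, E a Banach space, π : H → invertible isometries of E a homomorphism, and γ : G/H → G a section of the quotient map q : G → G/H. Then the map M : ℓ^p(G/H, E) → L^p(G, H, π, E) defined by (Mf)(x) = π(γ(q(x))^{-1} x)^{-1} f(q(x)) is an isometric isomorphism of Banach spaces, with inverse M^{-1}f = f ∘ γ. -/
/-- For a group `G`, a subgroup `H`, a Banach space `E`, a homomorphism
`π : H → invertible isometries of E`, a section `γ : G⧸H → G` of the quotient map,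
and `1 < p < ∞`, the map `M : ℓ^p(G/H, E) → L^p(G, H, π, E)` defined by
`(Mf)(x) = π(γ(q(x))⁻¹ x)⁻¹ (f (q x))` is an isometric isomorphism of Banach spaces,
linear, bijective, with inverse `f ↦ f ∘ γ`. -/
theorem stmt1 (G : Type*) [Group G] (H : Subgroup G)
    (E : Type*) [NormedAddCommGroup E] [NormedSpace ℂ E] [CompleteSpace E]
    (π : H →* (E ≃ₗᵢ[ℂ] E)) (p : ℝ) (hp : 1 < p)
    (γ : G ⧸ H → G) (hγ : ∀ v : G ⧸ H, (QuotientGroup.mk (γ v) : G ⧸ H) = v) :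
    ∃ M : {f : G ⧸ H → E // Summable fun v => ‖f v‖ ^ p} →
          {f : G → E // (∀ (x : G) (h : H), f (x * h) = (π h).symm (f x)) ∧
              Summable fun v : G ⧸ H => ‖f (γ v)‖ ^ p},
      Function.Bijective M ∧
      -- defining formula: if `x = γ(q x) * h` with `h ∈ H` then `(Mf)(x) = π(h)⁻¹ (f (q x))`
      (∀ f (x : G) (h : H), x = γ (QuotientGroup.mk x) * h →
        (M f).1 x = (π h).symm (f.1 (QuotientGroup.mk x))) ∧
      -- additivity
      (∀ f₁ f₂ f₃, (∀ v, f₃.1 v = f₁.1 v + f₂.1 v) →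
        ∀ x : G, (M f₃).1 x = (M f₁).1 x + (M f₂).1 x) ∧
      -- homogeneity
      (∀ (c : ℂ) f₁ f₂, (∀ v, f₂.1 v = c • f₁.1 v) →
        ∀ x : G, (M f₂).1 x = c • (M f₁).1 x) ∧
      -- isometry for the `ℓ^p`-type norms
      (∀ f, (∑' v : G ⧸ H, ‖(M f).1 (γ v)‖ ^ p) ^ (1 / p)
          = (∑' v : G ⧸ H, ‖f.1 v‖ ^ p) ^ (1 / p)) ∧
      -- the inverse of `M` is `f ↦ f ∘ γ`
      (∀ f (v : G ⧸ H), (M f).1 (γ v) = f.1 v) := by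
  classical
  have hmem : ∀ x : G, (γ (QuotientGroup.mk x))⁻¹ * x ∈ H := by
    intro x
    rw [← QuotientGroup.eq]
    exact hγ _
  set hx : G → H := fun x => ⟨(γ (QuotientGroup.mk x))⁻¹ * x, hmem x⟩ with hhx
  have hfactor : ∀ x : G, x = γ (QuotientGroup.mk x) * (hx x : G) := by
    intro x; simp [hhx]
  have hmul : ∀ (a b : E ≃ₗᵢ[ℂ] E) (y : E), (a * b).symm y = b.symm (a.symm y) := by
    intro a b y; rfl
  have hone : ∀ y : E, (1 : E ≃ₗᵢ[ℂ] E).symm y = y := fun y => rfl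
  have hxmul : ∀ (x : G) (h : H), hx (x * h) = hx x * h := by
    intro x h
    have hq : (QuotientGroup.mk (x * h) : G ⧸ H) = QuotientGroup.mk x :=
      QuotientGroup.mk_mul_of_mem x h.2
    ext
    simp [hhx, hq, mul_assoc]
  have hxγ : ∀ v : G ⧸ H, hx (γ v) = 1 := by
    intro v
    ext
    simp [hhx, hγ v]
  set M : {f : G ⧸ H → E // Summable fun v => ‖f v‖ ^ p} →
          {f : G → E // (∀ (x : G) (h : H), f (x * h) = (π h).symm (f x)) ∧
              Summable fun v : G ⧸ H => ‖f (γ v)‖ ^ p} :=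
    fun f => ⟨fun x => (π (hx x)).symm (f.1 (QuotientGroup.mk x)), by
      constructor
      · intro x h
        have hq : (QuotientGroup.mk (x * h) : G ⧸ H) = QuotientGroup.mk x :=
          QuotientGroup.mk_mul_of_mem x h.2
        simp only [hq, hxmul, map_mul, hmul]
      · have : ∀ v : G ⧸ H, (π (hx (γ v))).symm (f.1 (QuotientGroup.mk (γ v))) = f.1 v := by
          intro v; simp [hxγ, hγ, hone]
        simpa only [this] using f.2⟩ with hM
  have hMγ : ∀ f (v : G ⧸ H), (M f).1 (γ v) = f.1 v := by
    intro f v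
    simp [hM, hxγ, hγ, hone]
  refine ⟨M, ⟨?_, ?_⟩, ?_, ?_, ?_, ?_, hMγ⟩
  · -- injective
    intro f g hfg
    ext v
    rw [← hMγ f v, ← hMγ g v, hfg]
  · -- surjective
    intro g
    refine ⟨⟨fun v => g.1 (γ v), g.2.2⟩, ?_⟩
    ext x
    show (π (hx x)).symm (g.1 (γ (QuotientGroup.mk x))) = g.1 x
    conv_rhs => rw [hfactor x]
    rw [g.2.1]
  · -- defining formula
    intro f x h hxeq
    have h1 := hxmul (γ (QuotientGroup.mk x)) h
    rw [hxγ, one_mul] at h1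
    have : hx x = h := by rw [congrArg hx hxeq, h1]
    simp [hM, this]
  · intro f₁ f₂ f₃ h3 x
    simp [hM, h3]
  · intro c f₁ f₂ h2 x
    simp [hM, h2]
  · intro f
    congr 1
    exact tsum_congr fun v => by rw [hMγ]
end

section
/- Let G be a group, H ≤ G an (open) subgroup, E a Banach space, π : H → invertible isometries of E, ξ ∈ E and φ ∈ E*. Define f_ξ ∈ L^{p'}(G, H, π, E) by f_ξ(x) = π(γ(q(x))^{-1}x)^{-1} ξ if q(x) = H (the identity coset) and f_ξ(x) = 0 otherwise, and define g_φ ∈ L^p(G, H, π^t, E*) analogously by g_φ(x) = π(γ(q(x))^{-1}x)^t φ if q(x) = H and 0 otherwise. Then for every g ∈ G, the pairing ⟨L_g f_ξ, g_φ⟩ = ∑_{xH ∈ G/H} ⟨f_ξ(g^{-1}x), g_φ(x)⟩ equals ⟨π(g)ξ, φ⟩ if g ∈ H, and equals 0 if g ∉ H. -/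
/-! Since `g_φ` vanishes off the identity coset `H`, the pairing is the single term at the
representative `x₀ ∈ H` of that coset, where `γ(H) = 1` gives `g_φ(x₀) = φ ∘ π(x₀)`. There
`f_ξ(g⁻¹x₀)` is `π(g⁻¹x₀)⁻¹ ξ` if `g ∈ H` and `0` otherwise, and `π(x₀) π(g⁻¹x₀)⁻¹ = π(g)`. -/

open scoped Classical

open QuotientGroup

section

variable {G : Type*} [Group G] {H : Subgroup G}

theorem QuotientGroup.mk_eq_mk_one_iff {x : G} : (mk x : G ⧸ H) = mk 1 ↔ x ∈ H := by
  rw [QuotientGroup.eq, mul_one, inv_mem_iff]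

theorem QuotientGroup.out_mk_one_mem : (mk (1 : G) : G ⧸ H).out ∈ H :=
  mk_eq_mk_one_iff.mp (out_eq' _)

variable {𝕜 E : Type*} [NormedField 𝕜] [SeminormedAddCommGroup E] [NormedSpace 𝕜 E]
  (π : H →* (E ≃ₗᵢ[𝕜] E)) {γ : G ⧸ H → G} (hγ : ∀ v : G ⧸ H, (mk (γ v) : G ⧸ H) = v)

/-- The paper's `f_ξ`. -/
noncomputable def inducedVector (ξ : E) (x : G) : E :=
  if (mk x : G ⧸ H) = mk 1 then (π ⟨(γ (mk x))⁻¹ * x, QuotientGroup.eq.mp (hγ (mk x))⟩).symm ξ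
  else 0

/-- The paper's `g_φ`. -/
noncomputable def inducedFunctional (φ : E →L[𝕜] 𝕜) (x : G) : E →L[𝕜] 𝕜 :=
  if (mk x : G ⧸ H) = mk 1 then
    φ.comp ((π ⟨(γ (mk x))⁻¹ * x, QuotientGroup.eq.mp (hγ (mk x))⟩).toContinuousLinearEquiv
      : E →L[𝕜] E)
  else 0

theorem section_inv_mul_of_mem (hγ1 : γ (mk 1) = 1) {x : G} (hx : x ∈ H) :
    (⟨(γ (mk x))⁻¹ * x, QuotientGroup.eq.mp (hγ (mk x))⟩ : H) = ⟨x, hx⟩ := by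
  ext
  simp [mk_eq_mk_one_iff.mpr hx ▸ hγ1]

variable {π hγ}

theorem inducedVector_of_mem (hγ1 : γ (mk 1) = 1) (ξ : E) {x : G} (hx : x ∈ H) :
    inducedVector π hγ ξ x = (π ⟨x, hx⟩).symm ξ := by
  rw [inducedVector, if_pos (mk_eq_mk_one_iff.mpr hx), section_inv_mul_of_mem hγ hγ1 hx]

theorem inducedVector_of_notMem (ξ : E) {x : G} (hx : x ∉ H) : inducedVector π hγ ξ x = 0 :=
  if_neg (mt mk_eq_mk_one_iff.mp hx)

theorem inducedFunctional_of_mem (hγ1 : γ (mk 1) = 1) (φ : E →L[𝕜] 𝕜) {x : G} (hx : x ∈ H) :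
    inducedFunctional π hγ φ x = φ.comp ((π ⟨x, hx⟩).toContinuousLinearEquiv : E →L[𝕜] E) := by
  rw [inducedFunctional, if_pos (mk_eq_mk_one_iff.mpr hx), section_inv_mul_of_mem hγ hγ1 hx]

theorem inducedFunctional_of_notMem (φ : E →L[𝕜] 𝕜) {x : G} (hx : x ∉ H) :
    inducedFunctional π hγ φ x = 0 :=
  if_neg (mt mk_eq_mk_one_iff.mp hx)

theorem tsum_inducedFunctional_out (φ : E →L[𝕜] 𝕜) (F : G → E) :
    ∑' v : G ⧸ H, inducedFunctional π hγ φ v.out (F v.out) =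
      inducedFunctional π hγ φ (mk (1 : G) : G ⧸ H).out (F (mk (1 : G) : G ⧸ H).out) := by
  refine tsum_eq_single _ fun v hv ↦ ?_
  rw [inducedFunctional_of_notMem, zero_apply]
  rwa [← mk_eq_mk_one_iff, out_eq']

theorem inducedFunctional_apply_inducedVector_of_mem (hγ1 : γ (mk 1) = 1) (ξ : E)
    (φ : E →L[𝕜] 𝕜) {g x : G} (hg : g ∈ H) (hx : x ∈ H) :
    inducedFunctional π hγ φ x (inducedVector π hγ ξ (g⁻¹ * x)) = φ (π ⟨g, hg⟩ ξ) := by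
  have hgx : g⁻¹ * x ∈ H := H.mul_mem (H.inv_mem hg) hx
  have hg' : (⟨g, hg⟩ : H) = ⟨x, hx⟩ * (⟨g⁻¹ * x, hgx⟩ : H)⁻¹ := by ext; simp
  rw [inducedFunctional_of_mem hγ1 φ hx, inducedVector_of_mem hγ1 ξ hgx, hg', map_mul, map_inv]
  rfl

theorem inducedVector_inv_mul_of_notMem (ξ : E) {g x : G} (hg : g ∉ H) (hx : x ∈ H) :
    inducedVector π hγ ξ (g⁻¹ * x) = 0 :=
  inducedVector_of_notMem ξ fun hgx ↦ hg <| by simpa using H.mul_mem hx (H.inv_mem hgx)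

end

theorem stmt4_general (G : Type*) [Group G]
    (H : Subgroup G)
    (E : Type*) [NormedAddCommGroup E] [NormedSpace ℂ E]
    (π : H →* (E ≃ₗᵢ[ℂ] E))
    (γ : G ⧸ H → G) (hγ : ∀ v : G ⧸ H, (QuotientGroup.mk (γ v) : G ⧸ H) = v)
    (hγ1 : γ (QuotientGroup.mk (1 : G) : G ⧸ H) = 1)
    (ξ : E) (φ : E →L[ℂ] ℂ)
    (fξ : G → E)
    (hfξ : ∀ x : G, fξ x =
      if (QuotientGroup.mk x : G ⧸ H) = (QuotientGroup.mk (1 : G) : G ⧸ H) then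
        (π ⟨(γ (QuotientGroup.mk x))⁻¹ * x,
            QuotientGroup.eq.mp (hγ (QuotientGroup.mk x))⟩).symm ξ
      else 0)
    (gφ : G → (E →L[ℂ] ℂ))
    (hgφ : ∀ x : G, gφ x =
      if (QuotientGroup.mk x : G ⧸ H) = (QuotientGroup.mk (1 : G) : G ⧸ H) then
        φ.comp ((π ⟨(γ (QuotientGroup.mk x))⁻¹ * x,
            QuotientGroup.eq.mp (hγ (QuotientGroup.mk x))⟩).toContinuousLinearEquiv
            : E →L[ℂ] E)
      else 0)
    (g : G) :
    (∀ hg : g ∈ H,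
      (∑' v : G ⧸ H, gφ v.out (fξ (g⁻¹ * v.out))) = φ (π ⟨g, hg⟩ ξ)) ∧
    (g ∉ H → (∑' v : G ⧸ H, gφ v.out (fξ (g⁻¹ * v.out))) = 0) := by
  obtain rfl : fξ = inducedVector π hγ ξ := funext hfξ
  obtain rfl : gφ = inducedFunctional π hγ φ := funext hgφ
  rw [tsum_inducedFunctional_out φ fun x ↦ inducedVector π hγ ξ (g⁻¹ * x)]
  exact ⟨fun hg ↦ inducedFunctional_apply_inducedVector_of_mem hγ1 ξ φ hg out_mk_one_mem,
    fun hg ↦ by rw [inducedVector_inv_mul_of_notMem ξ hg out_mk_one_mem, map_zero]⟩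

/-- For an open subgroup `H` of `G`, conjugate exponents `p, p'`, a
section `γ` with `γ(H) = e`, and `ξ ∈ E`, `φ ∈ E*`, let `f_ξ` and `g_φ` be the
canonical extensions supported on the identity coset. Then for every `g ∈ G` the
pairing `⟨L_g f_ξ, g_φ⟩ = ∑_{xH} ⟨f_ξ(g⁻¹x), g_φ(x)⟩` equals `⟨π(g)ξ, φ⟩` if
`g ∈ H`, and `0` if `g ∉ H`. -/
theorem stmt4 (G : Type*) [Group G] [TopologicalSpace G] [IsTopologicalGroup G]
    (H : Subgroup G) (hH : IsOpen (H : Set G))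
    (E : Type*) [NormedAddCommGroup E] [NormedSpace ℂ E] [CompleteSpace E]
    (π : H →* (E ≃ₗᵢ[ℂ] E)) (p p' : ℝ) (hp : 1 < p) (hp' : 1 < p')
    (hpq : 1 / p + 1 / p' = 1)
    (γ : G ⧸ H → G) (hγ : ∀ v : G ⧸ H, (QuotientGroup.mk (γ v) : G ⧸ H) = v)
    (hγ1 : γ (QuotientGroup.mk (1 : G) : G ⧸ H) = 1)
    (ξ : E) (φ : E →L[ℂ] ℂ)
    (fξ : G → E)
    (hfξ : ∀ x : G, fξ x =
      if (QuotientGroup.mk x : G ⧸ H) = (QuotientGroup.mk (1 : G) : G ⧸ H) then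
        (π ⟨(γ (QuotientGroup.mk x))⁻¹ * x,
            QuotientGroup.eq.mp (hγ (QuotientGroup.mk x))⟩).symm ξ
      else 0)
    (gφ : G → (E →L[ℂ] ℂ))
    (hgφ : ∀ x : G, gφ x =
      if (QuotientGroup.mk x : G ⧸ H) = (QuotientGroup.mk (1 : G) : G ⧸ H) then
        φ.comp ((π ⟨(γ (QuotientGroup.mk x))⁻¹ * x,
            QuotientGroup.eq.mp (hγ (QuotientGroup.mk x))⟩).toContinuousLinearEquiv
            : E →L[ℂ] E)
      else 0)
    (g : G) :
    (∀ hg : g ∈ H,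
      (∑' v : G ⧸ H, gφ v.out (fξ (g⁻¹ * v.out))) = φ (π ⟨g, hg⟩ ξ)) ∧
    (g ∉ H → (∑' v : G ⧸ H, gφ v.out (fξ (g⁻¹ * v.out))) = 0) :=
  stmt4_general G H E π γ hγ hγ1 ξ φ fξ hfξ gφ hgφ g
end

section
/- If (E_α)_{α ∈ Λ} is a family of Banach spaces each of which is isometrically isomorphic to a quotient of a closed subspace of an L^p-space (a QSL_p-space), then the ℓ^p-direct sum ℓ^p-⊕_{α ∈ Λ} E_α is again isometrically isomorphic to a quotient of a closed subspace of an L^p-space. -/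
/-!
Write each `E_α` as `S_α ⧸ N_α` with `S_α` a closed subspace of `L^p(X_α, μ_α)`. The `ℓ^p`-sum of
the spaces `L^p(X_α, μ_α)` is isometric to `L^p` of the disjoint union `Σ α, X_α` carrying the sum
of the measures, so `ℓ^p-⊕ S_α` is (isometric to) a closed subspace of an `L^p`-space. The
coordinatewise quotient map `ℓ^p-⊕ S_α → ℓ^p-⊕ E_α` maps the open unit ball onto the open unit
ball: since `E_α` is Hausdorff, every `y_α` lifts with norm at most `(1 + ε) ‖y_α‖`, a bound that
is uniform in `α` and so survives the `ℓ^p`-sum. Hence `ℓ^p-⊕ E_α` is the quotient of that closed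
subspace by the kernel of this map.
-/

open MeasureTheory

/-- A Banach space is a `QSL_p`-space if it is isometrically isomorphic to a
quotient of a closed subspace of an `L^p`-space `L^p(X, μ)`. -/
def IsQSLp (p : ENNReal) [Fact (1 ≤ p)] (E : Type*) [NormedAddCommGroup E] [NormedSpace ℂ E] : Prop :=
  ∃ (X : Type) (_ : MeasurableSpace X) (μ : Measure X)
    (S : Submodule ℂ (Lp ℂ p μ)) (N : Submodule ℂ S),
      IsClosed (S : Set (Lp ℂ p μ)) ∧ IsClosed (N : Set S) ∧
        Nonempty (E ≃ₗᵢ[ℂ] (S ⧸ N))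

open scoped ENNReal

theorem ENNReal.ne_zero_of_fact_one_le {p : ℝ≥0∞} [Fact (1 ≤ p)] : p ≠ 0 :=
  (zero_lt_one.trans_le Fact.out).ne'

namespace LinearMap

section Ring

variable {R : Type*} [Ring R] {F F' G G' : Type*}
  [SeminormedAddCommGroup F] [Module R F] [SeminormedAddCommGroup F'] [Module R F']
  [SeminormedAddCommGroup G] [Module R G] [SeminormedAddCommGroup G'] [Module R G']

def IsMetricQuotient (T : F →ₗ[R] G) : Prop :=
  (∀ x, ‖T x‖ ≤ ‖x‖) ∧ ∀ y (ε : ℝ), 0 < ε → ∃ x, T x = y ∧ ‖x‖ < ‖y‖ + ε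

theorem isMetricQuotient_mkQ (N : Submodule R F) : IsMetricQuotient N.mkQ :=
  ⟨Submodule.Quotient.norm_mk_le N, fun _ _ hε => Submodule.Quotient.norm_mk_lt _ hε⟩

namespace IsMetricQuotient

variable {T : F →ₗ[R] G} (hT : IsMetricQuotient T)
include hT

theorem surjective : Function.Surjective T := fun y =>
  let ⟨x, hx, _⟩ := hT.2 y 1 one_pos
  ⟨x, hx⟩

theorem continuous : Continuous T :=
  AddMonoidHomClass.continuous_of_bound T 1 fun x => (hT.1 x).trans_eq (one_mul _).symm

theorem linearIsometryEquiv_comp (e : G ≃ₗᵢ[R] G') :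
    IsMetricQuotient (e.toLinearMap ∘ₗ T) := by
  refine ⟨fun x => (e.norm_map (T x)).trans_le (hT.1 x), fun y ε hε => ?_⟩
  obtain ⟨x, hx, hnorm⟩ := hT.2 (e.symm y) ε hε
  exact ⟨x, by simp [hx], by rwa [e.symm.norm_map] at hnorm⟩

theorem comp_linearIsometryEquiv (e : F' ≃ₗᵢ[R] F) :
    IsMetricQuotient (T ∘ₗ e.toLinearMap) := by
  refine ⟨fun x => (hT.1 (e x)).trans_eq (e.norm_map x), fun y ε hε => ?_⟩
  obtain ⟨x, hx, hnorm⟩ := hT.2 y ε hε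
  exact ⟨e.symm x, by simp [hx], by rwa [e.symm.norm_map]⟩

theorem norm_mk_ker (x : F) : ‖(Submodule.Quotient.mk x : F ⧸ ker T)‖ = ‖T x‖ := by
  refine le_antisymm (le_of_forall_pos_lt_add fun ε hε => ?_) ?_
  · obtain ⟨x', hx', hnorm⟩ := hT.2 (T x) ε hε
    have : (Submodule.Quotient.mk x' : F ⧸ ker T) = Submodule.Quotient.mk x := by
      rw [Submodule.Quotient.eq, mem_ker, map_sub, hx', sub_self]
    exact this ▸ (Submodule.Quotient.norm_mk_le _ x').trans_lt hnorm
  · refine QuotientAddGroup.le_norm_iff.2 fun x' hx' => ?_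
    have : T x' = T x := by
      rw [← sub_eq_zero, ← map_sub, ← mem_ker]
      exact (Submodule.Quotient.eq _).1 hx'
    exact this ▸ hT.1 x'

noncomputable def quotKerEquiv : (F ⧸ ker T) ≃ₗᵢ[R] G where
  toLinearEquiv := T.quotKerEquivOfSurjective hT.surjective
  norm_map' := Submodule.Quotient.mk_surjective _ |>.forall.2 fun x => (hT.norm_mk_ker x).symm

end IsMetricQuotient

end Ring

section Normed

variable {R : Type*} [Ring R] {F G : Type*} [SeminormedAddCommGroup F] [Module R F]
  [NormedAddCommGroup G] [Module R G] {T : F →ₗ[R] G}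

theorem IsMetricQuotient.exists_norm_le_mul (hT : IsMetricQuotient T) (y : G) {c : ℝ}
    (hc : 1 < c) : ∃ x, T x = y ∧ ‖x‖ ≤ c * ‖y‖ := by
  rcases eq_or_ne y 0 with rfl | hy
  · exact ⟨0, map_zero T, by simp⟩
  have hy' : 0 < ‖y‖ := norm_pos_iff.2 hy
  obtain ⟨x, hx, hnorm⟩ := hT.2 y ((c - 1) * ‖y‖) (mul_pos (sub_pos.2 hc) hy')
  exact ⟨x, hx, by linarith⟩

end Normed

end LinearMap

section lp

variable {𝕜 : Type*} [NormedRing 𝕜] {ι : Type*} {F G : ι → Type*}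
  [∀ i, NormedAddCommGroup (F i)] [∀ i, Module 𝕜 (F i)] [∀ i, IsBoundedSMul 𝕜 (F i)]
  [∀ i, NormedAddCommGroup (G i)] [∀ i, Module 𝕜 (G i)] [∀ i, IsBoundedSMul 𝕜 (G i)]
  {p : ℝ≥0∞} [Fact (1 ≤ p)]

def lpMap (T : ∀ i, F i →ₗ[𝕜] G i) (hT : ∀ i x, ‖T i x‖ ≤ ‖x‖) : lp F p →ₗ[𝕜] lp G p where
  toFun x := ⟨fun i => T i (x i), (lp.memℓp x).mono' fun i => hT i (x i)⟩
  map_add' x y := lp.ext <| funext fun i => map_add (T i) (x i) (y i)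
  map_smul' c x := lp.ext <| funext fun i => map_smul (T i) c (x i)

theorem norm_lpMap_le (T : ∀ i, F i →ₗ[𝕜] G i) (hT : ∀ i x, ‖T i x‖ ≤ ‖x‖) (x : lp F p) :
    ‖lpMap T hT x‖ ≤ ‖x‖ :=
  lp.norm_mono ENNReal.ne_zero_of_fact_one_le fun i => hT i (x i)

def lpMapₗᵢ (T : ∀ i, F i →ₗᵢ[𝕜] G i) : lp F p →ₗᵢ[𝕜] lp G p where
  toLinearMap := lpMap (fun i => (T i).toLinearMap) fun i x => ((T i).norm_map x).le
  norm_map' x := le_antisymm (norm_lpMap_le _ _ x) <|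
    lp.norm_mono ENNReal.ne_zero_of_fact_one_le fun i => ((T i).norm_map (x i)).ge

theorem LinearMap.IsMetricQuotient.lpMap {T : ∀ i, F i →ₗ[𝕜] G i}
    (hT : ∀ i, (T i).IsMetricQuotient) :
    (lpMap (p := p) T fun i => (hT i).1).IsMetricQuotient := by
  refine ⟨norm_lpMap_le _ _, fun y ε hε => ?_⟩
  set c : ℝ := 1 + ε / (‖y‖ + 1)
  have hc : 1 < c := lt_add_of_pos_right 1 (by positivity)
  choose x hx hnorm using fun i => (hT i).exists_norm_le_mul (y i) hc
  have hmem : Memℓp x p := ((lp.memℓp y).norm.const_mul c).mono hnorm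
  refine ⟨⟨x, hmem⟩, lp.ext (funext hx), ?_⟩
  calc ‖(⟨x, hmem⟩ : lp F p)‖ ≤ ‖c • lp.toNorm y‖ := lp.norm_mono ENNReal.ne_zero_of_fact_one_le
          fun i => (hnorm i).trans (le_abs_self _)
    _ = c * ‖y‖ := by
      rw [lp.norm_const_smul ENNReal.ne_zero_of_fact_one_le, lp.norm_toNorm,
        Real.norm_of_nonneg (by linarith)]
    _ < ‖y‖ + ε := by
      have : ε / (‖y‖ + 1) * ‖y‖ < ε := by
        rw [div_mul_eq_mul_div, div_lt_iff₀ (by positivity)]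
        nlinarith [norm_nonneg y]
      linarith [add_mul 1 (ε / (‖y‖ + 1)) ‖y‖]

end lp

section Sigma

variable {ι : Type*} {X : ι → Type*} [∀ i, MeasurableSpace (X i)]

theorem measurableSet_sigma_iff {s : Set (Σ i, X i)} :
    MeasurableSet s ↔ ∀ i, MeasurableSet (Sigma.mk i ⁻¹' s) :=
  MeasurableSpace.measurableSet_iInf

theorem measurable_sigma_iff {β : Type*} [MeasurableSpace β] {f : (Σ i, X i) → β} :
    Measurable f ↔ ∀ i, Measurable fun t => f ⟨i, t⟩ :=
  ⟨fun hf i _ hs => measurableSet_sigma_iff.1 (hf hs) i,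
    fun hf _ hs => measurableSet_sigma_iff.2 fun i => hf i hs⟩

theorem measurableEmbedding_sigmaMk (i : ι) :
    MeasurableEmbedding (Sigma.mk i : X i → Σ i, X i) where
  injective := sigma_mk_injective
  measurable := measurable_sigma_iff.1 measurable_id i
  measurableSet_image' s hs := by
    refine measurableSet_sigma_iff.2 fun j => ?_
    rcases eq_or_ne i j with rfl | hij
    · rwa [Set.preimage_image_eq _ sigma_mk_injective]
    · simp [Set.preimage, hij]

namespace MeasureTheory.Measure

noncomputable def sigma (μ : ∀ i, Measure (X i)) : Measure (Σ i, X i) :=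
  sum fun i => (μ i).map (Sigma.mk i)

variable (μ : ∀ i, Measure (X i))

theorem ae_sigma {P : (Σ i, X i) → Prop} (h : ∀ i, ∀ᵐ t ∂μ i, P ⟨i, t⟩) :
    ∀ᵐ z ∂sigma μ, P z := by
  -- the fibrewise null sets need not glue to a measurable set; their measurable hulls do
  let B : Set (Σ i, X i) := {z | z.2 ∈ toMeasurable (μ z.1) {t | ¬P ⟨z.1, t⟩}}
  have hB : MeasurableSet B :=
    measurableSet_sigma_iff.2 fun i => measurableSet_toMeasurable (μ i) {t | ¬P ⟨i, t⟩}
  refine measure_mono_null (t := B) (fun z hz => subset_toMeasurable _ _ hz) ?_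
  refine (sum_apply_eq_zero' hB).2 fun i => ?_
  rw [map_apply (measurableEmbedding_sigmaMk i).measurable hB]
  exact (measure_toMeasurable _).trans (h i)

theorem lintegral_sigma (f : (Σ i, X i) → ℝ≥0∞) :
    ∫⁻ z, f z ∂sigma μ = ∑' i, ∫⁻ t, f ⟨i, t⟩ ∂μ i := by
  simp only [sigma, lintegral_sum_measure, (measurableEmbedding_sigmaMk _).lintegral_map]

end MeasureTheory.Measure

open Measure

variable (μ : ∀ i, Measure (X i)) {p : ℝ≥0∞}

theorem eLpNorm_sigma_rpow {E : Type*} [NormedAddCommGroup E] (hp0 : p ≠ 0) (hp : p ≠ ⊤)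
    (f : (Σ i, X i) → E) :
    eLpNorm f p (sigma μ) ^ p.toReal = ∑' i, eLpNorm (fun t => f ⟨i, t⟩) p (μ i) ^ p.toReal := by
  have hp' : 0 < p.toReal := ENNReal.toReal_pos hp0 hp
  simp only [eLpNorm_eq_eLpNorm' hp0 hp, ← lintegral_rpow_enorm_eq_rpow_eLpNorm' hp',
    lintegral_sigma]

theorem aestronglyMeasurable_sigma {E : Type*} [TopologicalSpace E]
    [TopologicalSpace.PseudoMetrizableSpace E] [SecondCountableTopology E] [MeasurableSpace E]
    [BorelSpace E] {f : ∀ i, X i → E}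
    (hf : ∀ i, AEStronglyMeasurable (f i) (μ i)) :
    AEStronglyMeasurable (fun z : Σ i, X i => f z.1 z.2) (sigma μ) := by
  choose g hg hfg using hf
  refine ⟨fun z => g z.1 z.2, ?_, ae_sigma μ hfg⟩
  exact (measurable_sigma_iff.2 fun i => (hg i).measurable).stronglyMeasurable

variable {E : Type*} [NormedAddCommGroup E] [Fact (1 ≤ p)]

theorem eLpNorm_lp_sigma (hp : p ≠ ⊤) (x : lp (fun i => Lp E p (μ i)) p) :
    eLpNorm (fun z : Σ i, X i => x z.1 z.2) p (sigma μ) = ENNReal.ofReal ‖x‖ := by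
  have hp0 : p ≠ 0 := ENNReal.ne_zero_of_fact_one_le
  have hp' : 0 < p.toReal := ENNReal.toReal_pos hp0 hp
  have hx : ∀ i, eLpNorm (x i) p (μ i) ^ p.toReal = ENNReal.ofReal (‖x i‖ ^ p.toReal) := fun i => by
    rw [← ENNReal.ofReal_rpow_of_nonneg (norm_nonneg _) hp'.le, Lp.norm_def,
      ENNReal.ofReal_toReal (Lp.eLpNorm_ne_top _)]
  refine ENNReal.rpow_left_injective hp'.ne' ?_
  beta_reduce
  rw [eLpNorm_sigma_rpow μ hp0 hp]
  simp only [hx]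
  rw [← ENNReal.ofReal_tsum_of_nonneg (fun i => by positivity) ((lp.memℓp x).summable hp'),
    ← lp.norm_rpow_eq_tsum hp', ENNReal.ofReal_rpow_of_nonneg (norm_nonneg _) hp'.le]

variable [MeasurableSpace E] [BorelSpace E] [SecondCountableTopology E]

theorem memLp_lp_sigma (hp : p ≠ ⊤) (x : lp (fun i => Lp E p (μ i)) p) :
    MemLp (fun z : Σ i, X i => x z.1 z.2) p (sigma μ) := by
  refine ⟨aestronglyMeasurable_sigma μ (f := fun i => x i) fun i => Lp.aestronglyMeasurable _, ?_⟩
  rw [eLpNorm_lp_sigma μ hp x]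
  exact ENNReal.ofReal_lt_top

variable (𝕜 : Type*) [NormedRing 𝕜] [Module 𝕜 E] [IsBoundedSMul 𝕜 E]

noncomputable def lpToLpSigma (hp : p ≠ ⊤) :
    lp (fun i => Lp E p (μ i)) p →ₗᵢ[𝕜] Lp E p (sigma μ) where
  toFun x := (memLp_lp_sigma μ hp x).toLp
  map_add' x y := by
    rw [← MemLp.toLp_add]
    exact MemLp.toLp_congr _ _ (ae_sigma μ fun i => Lp.coeFn_add (x i) (y i))
  map_smul' c x := by
    rw [← MemLp.toLp_const_smul]
    exact MemLp.toLp_congr _ _ (ae_sigma μ fun i => Lp.coeFn_smul c (x i))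
  norm_map' x := by
    change ‖(memLp_lp_sigma μ hp x).toLp‖ = ‖x‖
    rw [Lp.norm_toLp, eLpNorm_lp_sigma μ hp x, ENNReal.toReal_ofReal (norm_nonneg x)]

end Sigma

section QSLp

variable {p : ℝ≥0∞} [Fact (1 ≤ p)] {E : Type*} [NormedAddCommGroup E] [NormedSpace ℂ E]

theorem IsQSLp.exists_isMetricQuotient (h : IsQSLp p E) :
    ∃ (X : Type) (_ : MeasurableSpace X) (μ : Measure X) (S : Submodule ℂ (Lp ℂ p μ)),
      IsClosed (S : Set (Lp ℂ p μ)) ∧ ∃ T : S →ₗ[ℂ] E, T.IsMetricQuotient := by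
  obtain ⟨X, _, μ, S, N, hS, -, ⟨e⟩⟩ := h
  exact ⟨X, _, μ, S, hS, _, (LinearMap.isMetricQuotient_mkQ N).linearIsometryEquiv_comp e.symm⟩

theorem isQSLp_of_isMetricQuotient {F : Type*} [NormedAddCommGroup F] [NormedSpace ℂ F]
    [CompleteSpace F] {X : Type} [MeasurableSpace X] {μ : Measure X} (J : F →ₗᵢ[ℂ] Lp ℂ p μ)
    {T : F →ₗ[ℂ] E} (hT : T.IsMetricQuotient) : IsQSLp p E := by
  have hT' := hT.comp_linearIsometryEquiv J.equivRange.symm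
  refine ⟨X, _, μ, LinearMap.range J.toLinearMap, LinearMap.ker _, ?_, ?_, ⟨hT'.quotKerEquiv.symm⟩⟩
  · rw [LinearMap.coe_range]
    exact J.isometry.isUniformInducing.isComplete_range.isClosed
  · exact isClosed_singleton.preimage hT'.continuous

end QSLp

theorem stmt6_general (p : ENNReal) [Fact (1 ≤ p)] (hp' : p ≠ ⊤)
    (Λ : Type) (Eα : Λ → Type*)
    [∀ α, NormedAddCommGroup (Eα α)] [∀ α, NormedSpace ℂ (Eα α)]
    (h : ∀ α, IsQSLp p (Eα α)) :
    IsQSLp p (lp Eα p) := by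
  choose X _ μ S hS T hT using fun α => (h α).exists_isMetricQuotient
  have := fun α => (hS α).completeSpace_coe
  exact isQSLp_of_isMetricQuotient
    ((lpToLpSigma μ ℂ hp').comp (lpMapₗᵢ fun α => (S α).subtypeₗᵢ))
    (LinearMap.IsMetricQuotient.lpMap hT)

/-- If `(E_α)_{α ∈ Λ}` is a family of `QSL_p`-spaces (`1 < p < ∞`),
then the `ℓ^p`-direct sum `ℓ^p-⊕_{α ∈ Λ} E_α` is again a `QSL_p`-space. -/
theorem stmt6 (p : ENNReal) [Fact (1 ≤ p)] (hp : 1 < p) (hp' : p ≠ ⊤)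
    (Λ : Type) (Eα : Λ → Type*)
    [∀ α, NormedAddCommGroup (Eα α)] [∀ α, NormedSpace ℂ (Eα α)]
    (h : ∀ α, IsQSLp p (Eα α)) :
    IsQSLp p (lp Eα p) :=
  stmt6_general p hp' Λ Eα h
end

section
/- A Banach space is isometrically isomorphic to a quotient of a closed subspace of an L^p-space if and only if it is isometrically isomorphic to a closed subspace of a quotient of an L^p-space. -/
/-!
Nothing about `L^p` is needed: the two classes agree over any normed space `M`. For closed
subspaces `N ⊆ S ⊆ M`, the map `S ⧸ N → M ⧸ N` is isometric, since the distance from a point of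
`S` to `N` is the same whether measured in `S` or in `M`, and its image `S.map N.mkQ` is closed
because its preimage in `M` is `S + N = S`. So a quotient `S ⧸ N` of a closed subspace is a closed
subspace of `M ⧸ N`, and a closed subspace `T` of `M ⧸ N` is the quotient by `N` of its preimage.
-/

open MeasureTheory

/-- A Banach space is an `SQL_p`-space if it is isometrically isomorphic to a
closed subspace of a quotient (by a closed subspace) of an `L^p`-space. -/
def IsSQLp (p : ENNReal) [Fact (1 ≤ p)] (E : Type*)
    [NormedAddCommGroup E] [NormedSpace ℂ E] : Prop :=
  ∃ (X : Type) (_ : MeasurableSpace X) (μ : Measure X)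
    (N : Submodule ℂ (Lp ℂ p μ)) (S : Submodule ℂ ((Lp ℂ p μ) ⧸ N)),
      IsClosed (N : Set (Lp ℂ p μ)) ∧ IsClosed (S : Set ((Lp ℂ p μ) ⧸ N)) ∧
        Nonempty (E ≃ₗᵢ[ℂ] S)

namespace Submodule

variable {𝕜 M : Type*} [NormedField 𝕜] [SeminormedAddCommGroup M] [NormedSpace 𝕜 M]

theorem Quotient.norm_mk_eq_infDist (N : Submodule 𝕜 M) (x : M) :
    ‖(Quotient.mk x : M ⧸ N)‖ = Metric.infDist x N :=
  QuotientAddGroup.norm_mk (S := N.toAddSubgroup) x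

def subquotientLinearIsometry {S N : Submodule 𝕜 M} {N' : Submodule 𝕜 S}
    (h : N'.map S.subtype = N) : (S ⧸ N') →ₗᵢ[𝕜] M ⧸ N where
  toLinearMap := N'.mapQ N S.subtype (h ▸ le_comap_map S.subtype N')
  norm_map' := by
    rintro ⟨x⟩
    have hN : (N : Set M) = Subtype.val '' (N' : Set S) := by rw [← h, map_coe]; rfl
    change ‖(Quotient.mk (x : M) : M ⧸ N)‖ = ‖(Quotient.mk x : S ⧸ N')‖
    rw [Quotient.norm_mk_eq_infDist, Quotient.norm_mk_eq_infDist, hN,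
      Metric.infDist_image isometry_subtype_coe]

theorem range_subquotientLinearIsometry {S N : Submodule 𝕜 M} {N' : Submodule 𝕜 S}
    (h : N'.map S.subtype = N) :
    LinearMap.range (subquotientLinearIsometry h).toLinearMap = S.map N.mkQ := by
  rw [subquotientLinearIsometry, range_mapQ, range_subtype]

theorem isClosed_map_mkQ {S N : Submodule 𝕜 M} (hS : IsClosed (S : Set M)) (hNS : N ≤ S) :
    IsClosed (S.map N.mkQ : Set (M ⧸ N)) := by
  rw [← N.isQuotientMap_mkQ.isClosed_preimage, ← comap_coe, comap_map_mkQ, sup_eq_right.2 hNS]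
  exact hS

/-- A normed form of the third isomorphism theorem. -/
noncomputable def subquotientEquivMapMkQ {S N : Submodule 𝕜 M} {N' : Submodule 𝕜 S}
    (hN' : IsClosed (N' : Set S)) (h : N'.map S.subtype = N) : (S ⧸ N') ≃ₗᵢ[𝕜] S.map N.mkQ :=
  letI := Quotient.normedAddCommGroup N' (hS := hN')
  (subquotientLinearIsometry h).equivRange.trans
    (LinearIsometryEquiv.ofEq _ _ (range_subquotientLinearIsometry h))

theorem exists_linearIsometryEquiv_closed_subspace_of_quotient {S : Submodule 𝕜 M}
    {N : Submodule 𝕜 S} (hS : IsClosed (S : Set M)) (hN : IsClosed (N : Set S)) :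
    ∃ (N' : Submodule 𝕜 M) (S' : Submodule 𝕜 (M ⧸ N')),
      IsClosed (N' : Set M) ∧ IsClosed (S' : Set (M ⧸ N')) ∧
        Nonempty ((S ⧸ N) ≃ₗᵢ[𝕜] S') := by
  have hN' : IsClosed (N.map S.subtype : Set M) := by
    rw [map_coe]
    exact hS.isClosedEmbedding_subtypeVal.isClosedMap _ hN
  exact ⟨_, _, hN', isClosed_map_mkQ hS (map_subtype_le S N), ⟨subquotientEquivMapMkQ hN rfl⟩⟩

theorem exists_linearIsometryEquiv_quotient_of_closed_subspace {N : Submodule 𝕜 M}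
    {S : Submodule 𝕜 (M ⧸ N)} (hN : IsClosed (N : Set M)) (hS : IsClosed (S : Set (M ⧸ N))) :
    ∃ (S' : Submodule 𝕜 M) (N' : Submodule 𝕜 S'),
      IsClosed (S' : Set M) ∧ IsClosed (N' : Set S') ∧
        Nonempty ((S' ⧸ N') ≃ₗᵢ[𝕜] S) := by
  set S' := S.comap N.mkQ
  have hNS' : N ≤ S' := fun x hx => by simp [S', (Quotient.mk_eq_zero N).2 hx]
  have htrace : (N.comap S'.subtype).map S'.subtype = N := by
    rw [map_comap_subtype, inf_eq_right.2 hNS']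
  have hS' : S'.map N.mkQ = S := map_comap_eq_of_surjective N.mkQ_surjective S
  refine ⟨S', N.comap S'.subtype, hS.preimage N.continuous_mkQ,
    hN.preimage continuous_subtype_val, ⟨?_⟩⟩
  exact (subquotientEquivMapMkQ (hN.preimage continuous_subtype_val) htrace).trans
    (LinearIsometryEquiv.ofEq _ _ hS')

end Submodule

theorem stmt7_general (p : ENNReal) [Fact (1 ≤ p)]
    (E : Type*) [NormedAddCommGroup E] [NormedSpace ℂ E] :
    IsQSLp p E ↔ IsSQLp p E := by
  constructor
  · rintro ⟨X, mX, μ, S, N, hS, hN, ⟨e⟩⟩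
    obtain ⟨N', S', hN', hS', ⟨e'⟩⟩ :=
      Submodule.exists_linearIsometryEquiv_closed_subspace_of_quotient hS hN
    exact ⟨X, mX, μ, N', S', hN', hS', ⟨e.trans e'⟩⟩
  · rintro ⟨X, mX, μ, N, S, hN, hS, ⟨e⟩⟩
    obtain ⟨S', N', hS', hN', ⟨e'⟩⟩ :=
      Submodule.exists_linearIsometryEquiv_quotient_of_closed_subspace hN hS
    exact ⟨X, mX, μ, S', N', hS', hN', ⟨e.trans e'.symm⟩⟩

/-- A Banach space is isometrically isomorphic to a quotient of a
closed subspace of an `L^p`-space if and only if it is isometrically isomorphic to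
a closed subspace of a quotient of an `L^p`-space (`1 < p < ∞`). -/
theorem stmt7 (p : ENNReal) [Fact (1 ≤ p)] (hp : 1 < p) (hp' : p ≠ ⊤)
    (E : Type*) [NormedAddCommGroup E] [NormedSpace ℂ E] [CompleteSpace E] :
    IsQSLp p E ↔ IsSQLp p E :=
  stmt7_general p E
end
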